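/- arXiv:0812.2733 — 2 statements merged into one kernel-verified Lean document; each statement's English description precedes it below -/
import Mathlib

section
/- Norm bound for the Dynkin–Helffer–Sjöstrand integral under a resolvent-type bound (Corollary A.5, abstract form): Let X be a Banach space, α ≥ 0, c > 0, and let N be an integer with N ≥ α + 1. Let R : ℂ∖ℝ → B(X) be continuous (in operator norm) and satisfy ‖R(z)‖ ≤ (c/|Im z|) (|z|/|Im z|)^α for all z ∉ ℝ. Fix a smooth function τ : ℝ → [0,1] with τ(s) = 1 for |s| ≤ 1 and τ(s) = 0 for |s| ≥ 2, and for Ψ ∈ C_c^∞(ℝ) define Ψ̃(x + iy) = ( Σ_{m=0}^{N} Ψ^{(m)}(x) (iy)^m / m! ) τ( y/⟨x⟩ ), where ⟨x⟩ = (1 + x²)^{1/2}, and ∂̄ = (1/2)(∂/∂x + i ∂/∂y). Then z ↦ ∂̄Ψ̃(z) R(z) is Bochner integrable on ℂ∖ℝ with respect to planar Lebesgue measure, and the operator (i/2π) ∫_ℂ ∂̄Ψ̃(z) R(z) dz̄ ∧ dz has operator norm at most c' ‖Ψ‖_{N+1}, where ‖Ψ‖_{N+1} = Σ_{m=0}^{N+1}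 ∫_ℝ |Ψ^{(m)}(x)| ⟨x⟩^{m-1} dx and c' depends only on c, α, N and τ. -/
open Set Filter MeasureTheory
noncomputable section

/-- The operator `∂̄ = (1/2)(∂/∂x + i ∂/∂y)` acting on a function on `ℂ ≅ ℝ²`. -/
def dbar (F : ℂ → ℂ) (z : ℂ) : ℂ :=
  (1/2 : ℂ) * (fderiv ℝ F z 1 + Complex.I * fderiv ℝ F z Complex.I)

/-- The explicit almost-analytic extension
`Ψ̃(x+iy) = (Σ_{m=0}^N Ψ^{(m)}(x)(iy)^m/m!) τ(y/⟨x⟩)`. -/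
def aaExt (N : ℕ) (τ : ℝ → ℝ) (Ψ : ℝ → ℂ) (z : ℂ) : ℂ :=
  (∑ m ∈ Finset.range (N+1),
      iteratedDeriv m Ψ z.re * (Complex.I * z.im) ^ m / (Nat.factorial m)) *
    ((τ (z.im / Real.sqrt (1 + z.re ^ 2)) : ℝ) : ℂ)

/-- The weighted norm `‖Ψ‖_{N+1} = Σ_{m=0}^{N+1} ∫_ℝ |Ψ^{(m)}(x)| ⟨x⟩^{m-1} dx`. -/
def psiNorm (N : ℕ) (Ψ : ℝ → ℂ) : ℝ :=
  ∑ m ∈ Finset.range (N+2),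
    ∫ x : ℝ, ‖iteratedDeriv m Ψ x‖ * Real.sqrt (1 + x ^ 2) ^ ((m : ℤ) - 1)


/-! Write `Ψ̃ = u · χ` with `u` the Taylor polynomial of order `N` and `χ(z) = τ(y/⟨x⟩)`.
Under `∂̄` the Taylor terms telescope, leaving `∂̄Ψ̃ = ½ Ψ^{(N+1)}(x) (iy)^N/N! · χ + u · ∂̄χ`.
On the support of `χ` we have `|y| ≤ 2⟨x⟩` and `‖z‖ ≤ 3⟨x⟩`, so against the resolvent bound
the first term is `O(|y|^{N-1-α} ⟨x⟩^α) = O(⟨x⟩^{N-1})`, using `N ≥ α + 1`; the second lives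
where `⟨x⟩ ≤ |y| ≤ 2⟨x⟩`, where both `‖R(z)‖` and `∂̄χ` are `O(1/⟨x⟩)`. Hence
`‖∂̄Ψ̃(z) R(z)‖ ≤ K Σ_m |Ψ^{(m)}(x)| ⟨x⟩^{m-2}` on `{|y| ≤ 2⟨x⟩}` and vanishes off it, and
integrating first in `y`, over a slice of length `4⟨x⟩`, gives `4K ‖Ψ‖_{N+1}`. -/

open Complex
open scoped ContDiff Topology

section Dbar

variable {F G : ℂ → ℂ} {z : ℂ}

lemma HasFDerivAt.dbar_eq {F' : ℂ →L[ℝ] ℂ} (h : HasFDerivAt F F' z) :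
    dbar F z = (F' 1 + I * F' I) / 2 := by
  rw [dbar, h.fderiv]; ring

lemma dbar_add (hF : DifferentiableAt ℝ F z) (hG : DifferentiableAt ℝ G z) :
    dbar (fun w => F w + G w) z = dbar F z + dbar G z := by
  rw [(hF.hasFDerivAt.fun_add hG.hasFDerivAt).dbar_eq, dbar, dbar]
  simp only [add_apply]; ring

lemma dbar_mul (hF : DifferentiableAt ℝ F z) (hG : DifferentiableAt ℝ G z) :
    dbar (fun w => F w * G w) z = dbar F z * G z + F z * dbar G z := by
  rw [(hF.hasFDerivAt.fun_mul hG.hasFDerivAt).dbar_eq, dbar, dbar]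
  simp only [add_apply, smul_apply, smul_eq_mul]; ring

lemma continuous_dbar (hF : ContDiff ℝ 1 F) : Continuous (dbar F) := by
  have h := hF.continuous_fderiv one_ne_zero
  unfold dbar
  fun_prop

lemma dbar_re_mul_im {a b : ℝ → ℂ} {a' b' : ℂ} (ha : HasDerivAt a a' z.re)
    (hb : HasDerivAt b b' z.im) :
    dbar (fun w => a w.re * b w.im) z = (a' * b z.im + I * (a z.re * b')) / 2 := by
  have hre : HasFDerivAt (fun w : ℂ => a w.re) _ z := ha.hasFDerivAt.comp z reCLM.hasFDerivAt
  have him : HasFDerivAt (fun w : ℂ => b w.im) _ z := hb.hasFDerivAt.comp z imCLM.hasFDerivAt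
  rw [(hre.fun_mul him).dbar_eq]
  simp only [add_apply, smul_apply, ContinuousLinearMap.comp_apply, reCLM_apply, imCLM_apply,
    ContinuousLinearMap.toSpanSingleton_apply, smul_eq_mul, one_re, one_im, I_re, I_im,
    zero_smul, one_smul]
  ring

lemma dbar_sum_re_mul_im {a b : ℕ → ℝ → ℂ} (ha : ∀ m x, HasDerivAt (a m) (a (m + 1) x) x)
    (hb₀ : ∀ y, HasDerivAt (b 0) 0 y) (hb : ∀ m y, HasDerivAt (b (m + 1)) (I * b m y) y)
    (N : ℕ) (z : ℂ) :
    dbar (fun w => ∑ m ∈ Finset.range (N + 1), a m w.re * b m w.im) z =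
      a (N + 1) z.re * b N z.im / 2 := by
  have hb' : ∀ m y, DifferentiableAt ℝ (b m) y
    | 0, y => (hb₀ y).differentiableAt
    | m + 1, y => (hb m y).differentiableAt
  have hdiff : ∀ m, DifferentiableAt ℝ (fun w : ℂ => a m w.re * b m w.im) z := fun m =>
    ((ha m z.re).differentiableAt.comp z reCLM.differentiableAt).mul
      ((hb' m z.im).comp z imCLM.differentiableAt)
  induction N with
  | zero =>
    simp only [zero_add, Finset.sum_range_one]
    rw [dbar_re_mul_im (ha 0 z.re) (hb₀ z.im)]
    ring
  | succ N ih =>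
    simp only [Finset.sum_range_succ _ (N + 1)]
    rw [dbar_add (DifferentiableAt.fun_sum fun m _ => hdiff m) (hdiff _), ih,
      dbar_re_mul_im (ha _ z.re) (hb N z.im)]
    linear_combination (a (N + 1) z.re * b N z.im / 2) * I_sq

end Dbar

lemma sqrt_one_add_sq_pos (x : ℝ) : 0 < √(1 + x ^ 2) := Real.sqrt_pos.2 (by positivity)

lemma hasDerivAt_sqrt_one_add_sq (x : ℝ) :
    HasDerivAt (fun x : ℝ => √(1 + x ^ 2)) (x / √(1 + x ^ 2)) x := by
  convert ((hasDerivAt_pow 2 x).const_add 1).sqrt (by positivity) using 1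
  field_simp
  ring

lemma norm_le_three_mul_sqrt_one_add_sq {z : ℂ} (hz : |z.im| ≤ 2 * √(1 + z.re ^ 2)) :
    ‖z‖ ≤ 3 * √(1 + z.re ^ 2) := by
  have hx : |z.re| ≤ √(1 + z.re ^ 2) := Real.abs_le_sqrt (by linarith)
  linarith [norm_le_abs_re_add_abs_im z]

lemma pow_div_mul_div_rpow_le {α Y Z W : ℝ} {k : ℕ} (hα : 0 ≤ α) (hk : α + 1 ≤ k) (hY : 0 < Y)
    (hYW : Y ≤ W) (hZ : 0 ≤ Z) (hZW : Z ≤ W) : Y ^ k / Y * (Z / Y) ^ α ≤ W ^ k / W := by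
  have hW : 0 < W := hY.trans_le hYW
  have hsplit : ∀ V : ℝ, 0 < V → V ^ k / V = V ^ ((k : ℝ) - 1 - α) * V ^ α := fun V hV => by
    rw [← Real.rpow_add hV, ← Real.rpow_natCast, ← Real.rpow_sub_one hV.ne']
    ring_nf
  calc Y ^ k / Y * (Z / Y) ^ α = Y ^ ((k : ℝ) - 1 - α) * Z ^ α := by
        rw [hsplit Y hY, Real.div_rpow hZ hY.le]
        field_simp [(Real.rpow_pos_of_pos hY α).ne']
    _ ≤ W ^ ((k : ℝ) - 1 - α) * W ^ α := by
        gcongr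
        linarith
    _ = W ^ k / W := (hsplit W hW).symm

def taylorSum (N : ℕ) (Ψ : ℝ → ℂ) (z : ℂ) : ℂ :=
  ∑ m ∈ Finset.range (N + 1), iteratedDeriv m Ψ z.re * (I * z.im) ^ m / (Nat.factorial m)

def cutoff (τ : ℝ → ℝ) (z : ℂ) : ℂ := (τ (z.im / √(1 + z.re ^ 2)) : ℂ)

lemma aaExt_eq (N : ℕ) (τ : ℝ → ℝ) (Ψ : ℝ → ℂ) :
    aaExt N τ Ψ = fun z => taylorSum N Ψ z * cutoff τ z := rfl

section TaylorSum

variable {N : ℕ} {Ψ : ℝ → ℂ} {z : ℂ}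

lemma hasDerivAt_I_mul_pow_div_factorial (m : ℕ) (y : ℝ) :
    HasDerivAt (fun y : ℝ => (I * y) ^ (m + 1) / ((m + 1).factorial : ℂ))
      (I * ((I * y) ^ m / (m.factorial : ℂ))) y := by
  have h : HasDerivAt (fun w : ℂ => (I * w) ^ (m + 1)) ((m + 1 : ℕ) * (I * y) ^ m * I) y := by
    simpa using ((hasDerivAt_id (y : ℂ)).const_mul I).fun_pow (m + 1)
  convert (h.div_const ((m + 1).factorial : ℂ)).comp_ofReal using 1
  rw [Nat.factorial_succ]
  push_cast
  field_simp

lemma dbar_taylorSum (hΨ : ContDiff ℝ ∞ Ψ) (N : ℕ) (z : ℂ) :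
    dbar (taylorSum N Ψ) z =
      iteratedDeriv (N + 1) Ψ z.re * (I * z.im) ^ N / N.factorial / 2 := by
  have ha : ∀ m x, HasDerivAt (iteratedDeriv m Ψ) (iteratedDeriv (m + 1) Ψ x) x := fun m x => by
    rw [iteratedDeriv_succ]
    exact (hΨ.differentiable_iteratedDeriv m (mod_cast ENat.natCast_lt_top m) x).hasDerivAt
  have h := dbar_sum_re_mul_im (b := fun m y => (I * y) ^ m / (m.factorial : ℂ)) ha
    (fun y => by simpa using hasDerivAt_const y (1 : ℂ)) hasDerivAt_I_mul_pow_div_factorial N z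
  unfold taylorSum
  simpa only [mul_div_assoc] using h

lemma contDiff_taylorSum (hΨ : ContDiff ℝ ∞ Ψ) (N : ℕ) : ContDiff ℝ ∞ (taylorSum N Ψ) := by
  have h : ∀ m, ContDiff ℝ ∞ (iteratedDeriv m Ψ) := fun m => by
    rw [iteratedDeriv_eq_iterate]; exact hΨ.iterate_deriv m
  have hre : ContDiff ℝ ∞ re := reCLM.contDiff
  have him : ContDiff ℝ ∞ fun z : ℂ => (z.im : ℂ) := ofRealCLM.contDiff.comp imCLM.contDiff
  unfold taylorSum
  fun_prop

lemma norm_taylorSum_le (hz : |z.im| ≤ 2 * √(1 + z.re ^ 2)) :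
    ‖taylorSum N Ψ z‖ ≤
      2 ^ N * ∑ m ∈ Finset.range (N + 1), ‖iteratedDeriv m Ψ z.re‖ * √(1 + z.re ^ 2) ^ m := by
  rw [taylorSum, Finset.mul_sum]
  refine (norm_sum_le _ _).trans (Finset.sum_le_sum fun m hm => ?_)
  have hmN : m ≤ N := Nat.lt_succ_iff.1 (Finset.mem_range.1 hm)
  have hfac : (1 : ℝ) ≤ m.factorial := mod_cast m.factorial_pos
  rw [norm_div, norm_mul, norm_pow, norm_mul, norm_I, one_mul, norm_real, Real.norm_eq_abs,
    norm_natCast]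
  calc ‖iteratedDeriv m Ψ z.re‖ * |z.im| ^ m / m.factorial
      ≤ ‖iteratedDeriv m Ψ z.re‖ * (2 * √(1 + z.re ^ 2)) ^ m / 1 := by gcongr
    _ = 2 ^ m * (‖iteratedDeriv m Ψ z.re‖ * √(1 + z.re ^ 2) ^ m) := by ring
    _ ≤ 2 ^ N * (‖iteratedDeriv m Ψ z.re‖ * √(1 + z.re ^ 2) ^ m) := by gcongr; norm_num

end TaylorSum

section Cutoff

variable {τ : ℝ → ℝ} {z : ℂ}

lemma deriv_eq_zero_of_abs_lt_one_or_two_lt (hτ1 : ∀ s : ℝ, |s| ≤ 1 → τ s = 1)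
    (hτ0 : ∀ s : ℝ, 2 ≤ |s| → τ s = 0) {s : ℝ} (hs : |s| < 1 ∨ 2 < |s|) : deriv τ s = 0 := by
  rcases hs with hs | hs
  · have h : τ =ᶠ[𝓝 s] fun _ => 1 := by
      filter_upwards [(isOpen_lt continuous_abs continuous_const).mem_nhds hs] with t ht
      exact hτ1 t ht.le
    rw [h.deriv_eq, deriv_const]
  · have h : τ =ᶠ[𝓝 s] fun _ => 0 := by
      filter_upwards [(isOpen_lt continuous_const continuous_abs).mem_nhds hs] with t ht
      exact hτ0 t ht.le
    rw [h.deriv_eq, deriv_const]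

lemma exists_forall_norm_deriv_le (hτ : ContDiff ℝ ∞ τ) (hτ0 : ∀ s : ℝ, 2 ≤ |s| → τ s = 0) :
    ∃ M, ∀ s, ‖deriv τ s‖ ≤ M := by
  have hsupp : HasCompactSupport τ := HasCompactSupport.intro isCompact_Icc fun s hs =>
    hτ0 s (by by_contra h; exact hs (abs_le.1 (not_le.1 h).le))
  exact (hτ.continuous_deriv (by simp)).bounded_above_of_compact_support hsupp.deriv

lemma contDiff_cutoff (hτ : ContDiff ℝ ∞ τ) : ContDiff ℝ ∞ (cutoff τ) := by
  have hre : ContDiff ℝ ∞ re := reCLM.contDiff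
  have hw : ContDiff ℝ ∞ fun z : ℂ => √(1 + z.re ^ 2) :=
    (by fun_prop : ContDiff ℝ ∞ fun z : ℂ => 1 + z.re ^ 2).sqrt fun z => by positivity
  have hq : ContDiff ℝ ∞ fun z : ℂ => z.im / √(1 + z.re ^ 2) :=
    imCLM.contDiff.div hw fun z => (sqrt_one_add_sq_pos z.re).ne'
  exact ofRealCLM.contDiff.comp (hτ.comp hq)

lemma dbar_cutoff (hτ : Differentiable ℝ τ) (z : ℂ) :
    dbar (cutoff τ) z = deriv τ (z.im / √(1 + z.re ^ 2)) *
      ((-(z.im * z.re) / √(1 + z.re ^ 2) ^ 3 : ℝ) + I * (√(1 + z.re ^ 2))⁻¹) / 2 := by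
  have hinv : HasFDerivAt (fun v : ℂ => (√(1 + v.re ^ 2))⁻¹) _ z :=
    ((hasDerivAt_sqrt_one_add_sq z.re).inv (sqrt_one_add_sq_pos z.re).ne').hasFDerivAt.comp z
      reCLM.hasFDerivAt
  have hq : HasFDerivAt (fun v : ℂ => v.im * (√(1 + v.re ^ 2))⁻¹) _ z :=
    imCLM.hasFDerivAt.mul hinv
  have hχ : HasFDerivAt (cutoff τ) _ z :=
    ofRealCLM.hasFDerivAt.comp z ((hτ _).hasDerivAt.comp_hasFDerivAt z hq)
  rw [hχ.dbar_eq]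
  simp only [ContinuousLinearMap.comp_apply, ContinuousLinearMap.toSpanSingleton_apply, add_apply,
    smul_apply, reCLM_apply, imCLM_apply, ofRealCLM_apply, smul_eq_mul, one_re, one_im, I_re, I_im,
    ofReal_add, ofReal_mul, ofReal_div, ofReal_neg, ofReal_pow, ofReal_inv, ofReal_zero,
    ofReal_one]
  field_simp
  ring

lemma cutoff_eq_zero (hτ0 : ∀ s : ℝ, 2 ≤ |s| → τ s = 0)
    (hz : 2 * √(1 + z.re ^ 2) ≤ |z.im|) : cutoff τ z = 0 := by
  have hw := sqrt_one_add_sq_pos z.re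
  rw [cutoff, hτ0 _ (by rwa [abs_div, abs_of_pos hw, le_div_iff₀ hw]), ofReal_zero]

lemma dbar_cutoff_eq_zero (hτ : Differentiable ℝ τ) (hτ1 : ∀ s : ℝ, |s| ≤ 1 → τ s = 1)
    (hτ0 : ∀ s : ℝ, 2 ≤ |s| → τ s = 0)
    (hz : |z.im| < √(1 + z.re ^ 2) ∨ 2 * √(1 + z.re ^ 2) < |z.im|) : dbar (cutoff τ) z = 0 := by
  have hw := sqrt_one_add_sq_pos z.re
  rw [dbar_cutoff hτ, deriv_eq_zero_of_abs_lt_one_or_two_lt hτ1 hτ0, ofReal_zero, zero_mul,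
    zero_div]
  rwa [abs_div, abs_of_pos hw, div_lt_one hw, lt_div_iff₀ hw]

lemma norm_cutoff_le_one (hτr : ∀ s, τ s ∈ Icc (0 : ℝ) 1) (z : ℂ) : ‖cutoff τ z‖ ≤ 1 := by
  obtain ⟨h0, h1⟩ := hτr (z.im / √(1 + z.re ^ 2))
  rw [cutoff, norm_real, Real.norm_of_nonneg h0]
  exact h1

lemma norm_dbar_cutoff_le (hτ : Differentiable ℝ τ) {M : ℝ} (hM : ∀ s, ‖deriv τ s‖ ≤ M)
    (hz : |z.im| ≤ 2 * √(1 + z.re ^ 2)) : ‖dbar (cutoff τ) z‖ ≤ 2 * M / √(1 + z.re ^ 2) := by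
  set w := √(1 + z.re ^ 2)
  have hw : 0 < w := sqrt_one_add_sq_pos z.re
  have hM0 : 0 ≤ M := (norm_nonneg _).trans (hM 0)
  have hxw : |z.re| ≤ w := Real.abs_le_sqrt (by linarith)
  have hre : |-(z.im * z.re) / w ^ 3| ≤ 2 / w := by
    rw [abs_div, abs_neg, abs_mul, abs_of_pos (pow_pos hw 3), div_le_div_iff₀ (by positivity) hw]
    calc |z.im| * |z.re| * w ≤ 2 * w * w * w := by gcongr
      _ = 2 * w ^ 3 := by ring
  have hsum : ‖((-(z.im * z.re) / w ^ 3 : ℝ) : ℂ) + I * (w⁻¹ : ℝ)‖ ≤ 3 / w := by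
    calc _ ≤ |-(z.im * z.re) / w ^ 3| + |w⁻¹| := by
          refine (norm_add_le _ _).trans ?_
          rw [norm_mul, norm_I, one_mul, norm_real, norm_real, Real.norm_eq_abs, Real.norm_eq_abs]
      _ ≤ 2 / w + 1 / w := by rw [abs_inv, abs_of_pos hw, inv_eq_one_div]; gcongr
      _ = 3 / w := by ring
  rw [dbar_cutoff hτ, norm_div, norm_mul, norm_real, RCLike.norm_ofNat]
  calc ‖deriv τ (z.im / w)‖ * ‖((-(z.im * z.re) / w ^ 3 : ℝ) : ℂ) + I * (w⁻¹ : ℝ)‖ / 2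
      ≤ M * (3 / w) / 2 := by gcongr; exact hM _
    _ ≤ 2 * M / w := by rw [div_le_div_iff₀ two_pos hw]; field_simp; nlinarith

end Cutoff

lemma dbar_aaExt {τ : ℝ → ℝ} {Ψ : ℝ → ℂ} (hτ : ContDiff ℝ ∞ τ) (hΨ : ContDiff ℝ ∞ Ψ)
    (N : ℕ) (z : ℂ) :
    dbar (aaExt N τ Ψ) z =
      iteratedDeriv (N + 1) Ψ z.re * (I * z.im) ^ N / N.factorial / 2 * cutoff τ z +
        taylorSum N Ψ z * dbar (cutoff τ) z := by
  rw [aaExt_eq, dbar_mul ((contDiff_taylorSum hΨ N).differentiable (by simp) z)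
    ((contDiff_cutoff hτ).differentiable (by simp) z), dbar_taylorSum hΨ]

lemma continuous_dbar_aaExt {τ : ℝ → ℝ} {Ψ : ℝ → ℂ} (hτ : ContDiff ℝ ∞ τ)
    (hΨ : ContDiff ℝ ∞ Ψ) (N : ℕ) : Continuous (dbar (aaExt N τ Ψ)) :=
  continuous_dbar (((contDiff_taylorSum hΨ N).mul (contDiff_cutoff hτ)).of_le (by simp))

def jetMajorant (N : ℕ) (Ψ : ℝ → ℂ) (x : ℝ) : ℝ :=
  (∑ m ∈ Finset.range (N + 2), ‖iteratedDeriv m Ψ x‖ * √(1 + x ^ 2) ^ m) / √(1 + x ^ 2) ^ 2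

def stripMajorant (N : ℕ) (Ψ : ℝ → ℂ) : ℂ → ℝ :=
  {z : ℂ | |z.im| ≤ 2 * √(1 + z.re ^ 2)}.indicator fun z => jetMajorant N Ψ z.re

lemma stripMajorant_nonneg (N : ℕ) (Ψ : ℝ → ℂ) (z : ℂ) : 0 ≤ stripMajorant N Ψ z :=
  indicator_nonneg (fun _ _ => div_nonneg (Finset.sum_nonneg fun _ _ => by positivity)
    (by positivity)) z

section PointwiseBound

variable {α c r : ℝ} {N : ℕ} {Ψ : ℝ → ℂ} {z : ℂ}

lemma norm_taylorRemainder_mul_le {τ : ℝ → ℝ} (hα : 0 ≤ α) (hN : α + 1 ≤ N) (hc : 0 ≤ c)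
    (hτr : ∀ s, τ s ∈ Icc (0 : ℝ) 1) (hz : z.im ≠ 0) (hzw : |z.im| ≤ 2 * √(1 + z.re ^ 2))
    (hr0 : 0 ≤ r) (hr : r ≤ c / |z.im| * (‖z‖ / |z.im|) ^ α) :
    ‖iteratedDeriv (N + 1) Ψ z.re * (I * z.im) ^ N / N.factorial / 2 * cutoff τ z‖ * r ≤
      c * 3 ^ N * (‖iteratedDeriv (N + 1) Ψ z.re‖ * √(1 + z.re ^ 2) ^ (N + 1)) /
        √(1 + z.re ^ 2) ^ 2 := by
  set w := √(1 + z.re ^ 2)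
  set a := ‖iteratedDeriv (N + 1) Ψ z.re‖
  have hw : 0 < w := sqrt_one_add_sq_pos z.re
  have hy : 0 < |z.im| := abs_pos.2 hz
  have hfac : (1 : ℝ) ≤ N.factorial := mod_cast N.factorial_pos
  have hterm : ‖iteratedDeriv (N + 1) Ψ z.re * (I * z.im) ^ N / N.factorial / 2 * cutoff τ z‖ ≤
      a * |z.im| ^ N := by
    rw [norm_mul, norm_div, norm_div, norm_mul, norm_pow, norm_mul, norm_I, one_mul, norm_real,
      Real.norm_eq_abs, norm_natCast, RCLike.norm_ofNat]
    calc a * |z.im| ^ N / N.factorial / 2 * ‖cutoff τ z‖ ≤ a * |z.im| ^ N / 1 / 1 * 1 := by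
          gcongr
          · norm_num
          · exact norm_cutoff_le_one hτr z
      _ = a * |z.im| ^ N := by ring
  have hweight : |z.im| ^ N / |z.im| * (‖z‖ / |z.im|) ^ α ≤ (3 * w) ^ N / (3 * w) :=
    pow_div_mul_div_rpow_le hα hN hy (by linarith) (norm_nonneg z)
      (norm_le_three_mul_sqrt_one_add_sq hzw)
  calc _ ≤ a * |z.im| ^ N * (c / |z.im| * (‖z‖ / |z.im|) ^ α) :=
        mul_le_mul hterm hr hr0 (by positivity)
    _ = c * a * (|z.im| ^ N / |z.im| * (‖z‖ / |z.im|) ^ α) := by ring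
    _ ≤ c * a * ((3 * w) ^ N / (3 * w)) := by gcongr
    _ = c * 3 ^ N * (a * w ^ (N + 1)) / w ^ 2 / 3 := by field_simp; ring
    _ ≤ c * 3 ^ N * (a * w ^ (N + 1)) / w ^ 2 := div_le_self (by positivity) (by norm_num)

lemma norm_taylorSum_mul_dbar_cutoff_mul_le {τ : ℝ → ℝ} {M : ℝ} (hα : 0 ≤ α) (hc : 0 ≤ c)
    (hτ : Differentiable ℝ τ) (hτ1 : ∀ s : ℝ, |s| ≤ 1 → τ s = 1)
    (hτ0 : ∀ s : ℝ, 2 ≤ |s| → τ s = 0) (hM : ∀ s, ‖deriv τ s‖ ≤ M)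
    (hzw : |z.im| ≤ 2 * √(1 + z.re ^ 2)) (hr0 : 0 ≤ r)
    (hr : r ≤ c / |z.im| * (‖z‖ / |z.im|) ^ α) :
    ‖taylorSum N Ψ z * dbar (cutoff τ) z‖ * r ≤
      2 ^ (N + 1) * M * c * 3 ^ α *
        (∑ m ∈ Finset.range (N + 1), ‖iteratedDeriv m Ψ z.re‖ * √(1 + z.re ^ 2) ^ m) /
          √(1 + z.re ^ 2) ^ 2 := by
  set w := √(1 + z.re ^ 2)
  set S := ∑ m ∈ Finset.range (N + 1), ‖iteratedDeriv m Ψ z.re‖ * w ^ m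
  have hw : 0 < w := sqrt_one_add_sq_pos z.re
  have hM0 : 0 ≤ M := (norm_nonneg _).trans (hM 0)
  rcases lt_or_ge |z.im| w with hyw | hyw
  · rw [dbar_cutoff_eq_zero hτ hτ1 hτ0 (Or.inl hyw), mul_zero, norm_zero, zero_mul]
    positivity
  have hr' : r ≤ c * 3 ^ α / w := by
    have hy : 0 < |z.im| := hw.trans_le hyw
    have hratio : (‖z‖ / |z.im|) ^ α ≤ 3 ^ α := by
      gcongr
      rw [div_le_iff₀ hy]
      linarith [norm_le_three_mul_sqrt_one_add_sq hzw]
    calc r ≤ c / |z.im| * (‖z‖ / |z.im|) ^ α := hr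
      _ ≤ c / w * 3 ^ α := by gcongr
      _ = c * 3 ^ α / w := by ring
  rw [norm_mul]
  calc ‖taylorSum N Ψ z‖ * ‖dbar (cutoff τ) z‖ * r
      ≤ 2 ^ N * S * (2 * M / w) * (c * 3 ^ α / w) := by
        gcongr
        · exact norm_taylorSum_le hzw
        · exact norm_dbar_cutoff_le hτ hM hzw
    _ = 2 ^ (N + 1) * M * c * 3 ^ α * S / w ^ 2 := by field_simp; ring

lemma norm_dbar_aaExt_mul_le {τ : ℝ → ℝ} {M : ℝ} (hα : 0 ≤ α) (hN : α + 1 ≤ N) (hc : 0 ≤ c)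
    (hτ : ContDiff ℝ ∞ τ) (hτr : ∀ s, τ s ∈ Icc (0 : ℝ) 1) (hτ1 : ∀ s : ℝ, |s| ≤ 1 → τ s = 1)
    (hτ0 : ∀ s : ℝ, 2 ≤ |s| → τ s = 0) (hM : ∀ s, ‖deriv τ s‖ ≤ M) (hΨ : ContDiff ℝ ∞ Ψ)
    (hz : z.im ≠ 0) (hr0 : 0 ≤ r) (hr : r ≤ c / |z.im| * (‖z‖ / |z.im|) ^ α) :
    ‖dbar (aaExt N τ Ψ) z‖ * r ≤
      (c * 3 ^ N + 2 ^ (N + 1) * M * c * 3 ^ α) * stripMajorant N Ψ z := by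
  have hτd : Differentiable ℝ τ := hτ.differentiable (by simp)
  rw [dbar_aaExt hτ hΨ, stripMajorant, indicator_apply]
  split_ifs with hzw
  · rw [jetMajorant, Finset.sum_range_succ]
    set w := √(1 + z.re ^ 2)
    set S := ∑ m ∈ Finset.range (N + 1), ‖iteratedDeriv m Ψ z.re‖ * w ^ m
    set T := ‖iteratedDeriv (N + 1) Ψ z.re‖ * w ^ (N + 1)
    have hM0 : 0 ≤ M := (norm_nonneg _).trans (hM 0)
    have hS : 0 ≤ S := Finset.sum_nonneg fun m _ => by positivity
    have hT : 0 ≤ T := by positivity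
    have ha : 0 ≤ c * 3 ^ N := by positivity
    have hb : 0 ≤ 2 ^ (N + 1) * M * c * 3 ^ α := by positivity
    calc _ ≤ _ + _ := (mul_le_mul_of_nonneg_right (norm_add_le _ _) hr0).trans_eq (add_mul _ _ _)
      _ ≤ c * 3 ^ N * T / w ^ 2 + 2 ^ (N + 1) * M * c * 3 ^ α * S / w ^ 2 :=
          add_le_add (norm_taylorRemainder_mul_le hα hN hc hτr hz hzw hr0 hr)
            (norm_taylorSum_mul_dbar_cutoff_mul_le hα hc hτd hτ1 hτ0 hM hzw hr0 hr)
      _ ≤ (c * 3 ^ N + 2 ^ (N + 1) * M * c * 3 ^ α) * ((S + T) / w ^ 2) := by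
          rw [← add_div, mul_div_assoc']
          gcongr
          nlinarith [mul_nonneg ha hS, mul_nonneg hb hT]
  · have hzw' : 2 * √(1 + z.re ^ 2) < |z.im| := not_le.1 hzw
    rw [cutoff_eq_zero hτ0 hzw'.le, dbar_cutoff_eq_zero hτd hτ1 hτ0 (Or.inr hzw')]
    simp

end PointwiseBound

section RegionBetweenGraphs

variable {h : ℝ → ℝ}

lemma indicator_abs_snd_le_slice (φ : ℝ → ℝ) (x : ℝ) :
    (fun y => {p : ℝ × ℝ | |p.2| ≤ h p.1}.indicator (fun p => φ p.1) (x, y)) =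
      (Icc (-h x) (h x)).indicator fun _ => φ x := by
  ext y
  simp only [indicator_apply, mem_ofPred_eq, mem_Icc, abs_le]

lemma integral_indicator_abs_snd_le_slice (hx : ∀ x, 0 ≤ h x) (φ : ℝ → ℝ) (x : ℝ) :
    ∫ y, {p : ℝ × ℝ | |p.2| ≤ h p.1}.indicator (fun p => φ p.1) (x, y) = 2 * h x * φ x := by
  rw [indicator_abs_snd_le_slice, integral_indicator_const _ measurableSet_Icc,
    Real.volume_real_Icc, smul_eq_mul, max_eq_left (by linarith [hx x])]
  ring

variable {φ : ℝ → ℝ}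

lemma integrable_indicator_abs_snd_le (hh : Measurable h) (hx : ∀ x, 0 ≤ h x)
    (hφ : Measurable φ) (hint : Integrable fun x => h x * φ x) :
    Integrable ({p : ℝ × ℝ | |p.2| ≤ h p.1}.indicator fun p => φ p.1) := by
  have hS : MeasurableSet {p : ℝ × ℝ | |p.2| ≤ h p.1} :=
    measurableSet_le (by fun_prop) (by fun_prop)
  have hmeas : AEStronglyMeasurable ({p : ℝ × ℝ | |p.2| ≤ h p.1}.indicator fun p => φ p.1)
      (volume.prod volume) := ((hφ.comp measurable_fst).indicator hS).aestronglyMeasurable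
  rw [Measure.volume_eq_prod, integrable_prod_iff hmeas]
  refine ⟨ae_of_all _ fun x => ?_, ?_⟩
  · rw [indicator_abs_snd_le_slice, integrable_indicator_iff measurableSet_Icc]
    exact integrableOn_const measure_Icc_lt_top.ne
  · simp only [norm_indicator_eq_indicator_norm,
      integral_indicator_abs_snd_le_slice hx (fun x => ‖φ x‖)]
    refine (hint.norm.const_mul 2).congr (ae_of_all _ fun x => ?_)
    simp only [norm_mul, Real.norm_of_nonneg (hx x), mul_assoc]

lemma integral_indicator_abs_snd_le (hh : Measurable h) (hx : ∀ x, 0 ≤ h x)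
    (hφ : Measurable φ) (hint : Integrable fun x => h x * φ x) :
    ∫ p : ℝ × ℝ, {p : ℝ × ℝ | |p.2| ≤ h p.1}.indicator (fun p => φ p.1) p =
      ∫ x, 2 * h x * φ x := by
  have hint₂ := integrable_indicator_abs_snd_le hh hx hφ hint
  rw [Measure.volume_eq_prod] at hint₂ ⊢
  rw [integral_prod _ hint₂]
  simp only [integral_indicator_abs_snd_le_slice hx]

lemma integrable_indicator_abs_im_le (hh : Measurable h) (hx : ∀ x, 0 ≤ h x)
    (hφ : Measurable φ) (hint : Integrable fun x => h x * φ x) :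
    Integrable ({z : ℂ | |z.im| ≤ h z.re}.indicator fun z => φ z.re) :=
  (volume_preserving_equiv_real_prod.integrable_comp_emb
    measurableEquivRealProd.measurableEmbedding).2
    (integrable_indicator_abs_snd_le hh hx hφ hint)

lemma integral_indicator_abs_im_le (hh : Measurable h) (hx : ∀ x, 0 ≤ h x)
    (hφ : Measurable φ) (hint : Integrable fun x => h x * φ x) :
    ∫ z : ℂ, {z : ℂ | |z.im| ≤ h z.re}.indicator (fun z => φ z.re) z = ∫ x, 2 * h x * φ x :=
  (volume_preserving_equiv_real_prod.integral_comp
    measurableEquivRealProd.measurableEmbedding _).trans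
    (integral_indicator_abs_snd_le hh hx hφ hint)

end RegionBetweenGraphs

lemma tsupport_iteratedDeriv_subset {𝕜 F : Type*} [NontriviallyNormedField 𝕜]
    [NormedAddCommGroup F] [NormedSpace 𝕜 F] (f : 𝕜 → F) (m : ℕ) :
    tsupport (iteratedDeriv m f) ⊆ tsupport f := by
  induction m with
  | zero => rw [iteratedDeriv_zero]
  | succ m ih => rw [iteratedDeriv_succ]; exact tsupport_deriv_subset.trans ih

section Integrability

variable {N : ℕ} {Ψ : ℝ → ℂ}

lemma sqrt_mul_jetMajorant (N : ℕ) (Ψ : ℝ → ℂ) (x : ℝ) :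
    √(1 + x ^ 2) * jetMajorant N Ψ x =
      ∑ m ∈ Finset.range (N + 2), ‖iteratedDeriv m Ψ x‖ * √(1 + x ^ 2) ^ ((m : ℤ) - 1) := by
  rw [jetMajorant, mul_div_assoc', Finset.mul_sum, Finset.sum_div]
  refine Finset.sum_congr rfl fun m _ => ?_
  rw [zpow_sub_one₀ (sqrt_one_add_sq_pos x).ne', zpow_natCast]
  field_simp

lemma continuous_norm_iteratedDeriv_mul_zpow (hΨ : ContDiff ℝ ∞ Ψ) (m : ℕ) (k : ℤ) :
    Continuous fun x => ‖iteratedDeriv m Ψ x‖ * √(1 + x ^ 2) ^ k :=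
  (hΨ.continuous_iteratedDeriv m (mod_cast le_top)).norm.mul
    ((by fun_prop : Continuous fun x : ℝ => √(1 + x ^ 2)).zpow₀ k
      fun x => Or.inl (sqrt_one_add_sq_pos x).ne')

lemma integrable_norm_iteratedDeriv_mul_zpow (hΨ : ContDiff ℝ ∞ Ψ) (hΨc : HasCompactSupport Ψ)
    (m : ℕ) (k : ℤ) : Integrable fun x => ‖iteratedDeriv m Ψ x‖ * √(1 + x ^ 2) ^ k :=
  (continuous_norm_iteratedDeriv_mul_zpow hΨ m k).integrable_of_hasCompactSupport
    (hΨc.mono' ((subset_tsupport _).trans (tsupport_iteratedDeriv_subset Ψ m))).norm.mul_right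

lemma continuous_jetMajorant (hΨ : ContDiff ℝ ∞ Ψ) : Continuous (jetMajorant N Ψ) := by
  have h : ∀ m : ℕ, Continuous fun x => ‖iteratedDeriv m Ψ x‖ * √(1 + x ^ 2) ^ m := fun m => by
    simpa only [zpow_natCast] using continuous_norm_iteratedDeriv_mul_zpow hΨ m m
  unfold jetMajorant
  fun_prop (disch := exact fun x => (pow_pos (sqrt_one_add_sq_pos x) 2).ne')

lemma integrable_sqrt_mul_jetMajorant (hΨ : ContDiff ℝ ∞ Ψ) (hΨc : HasCompactSupport Ψ) :
    Integrable fun x => √(1 + x ^ 2) * jetMajorant N Ψ x := by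
  simp only [sqrt_mul_jetMajorant]
  exact integrable_finsetSum _ fun m _ => integrable_norm_iteratedDeriv_mul_zpow hΨ hΨc m _

lemma integral_sqrt_mul_jetMajorant (hΨ : ContDiff ℝ ∞ Ψ) (hΨc : HasCompactSupport Ψ) :
    ∫ x, √(1 + x ^ 2) * jetMajorant N Ψ x = psiNorm N Ψ := by
  simp only [sqrt_mul_jetMajorant]
  exact integral_finsetSum _ fun m _ => integrable_norm_iteratedDeriv_mul_zpow hΨ hΨc m _

lemma integrable_stripMajorant (hΨ : ContDiff ℝ ∞ Ψ) (hΨc : HasCompactSupport Ψ) :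
    Integrable (stripMajorant N Ψ) :=
  integrable_indicator_abs_im_le (h := fun x => 2 * √(1 + x ^ 2)) (by fun_prop)
    (fun x => by positivity) (continuous_jetMajorant hΨ).measurable
    (by simpa only [mul_assoc] using (integrable_sqrt_mul_jetMajorant hΨ hΨc).const_mul 2)

lemma integral_stripMajorant (hΨ : ContDiff ℝ ∞ Ψ) (hΨc : HasCompactSupport Ψ) :
    ∫ z, stripMajorant N Ψ z = 4 * psiNorm N Ψ := by
  rw [stripMajorant, integral_indicator_abs_im_le (h := fun x => 2 * √(1 + x ^ 2)) (by fun_prop)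
      (fun x => by positivity) (continuous_jetMajorant hΨ).measurable
      (by simpa only [mul_assoc] using (integrable_sqrt_mul_jetMajorant hΨ hΨc).const_mul 2),
    ← integral_sqrt_mul_jetMajorant hΨ hΨc, ← integral_const_mul]
  congr 1 with x
  ring

end Integrability

/-- Norm bound for the Dynkin–Helffer–Sjöstrand integral under a resolvent-type
bound (abstract form): the integrand is Bochner integrable on `ℂ ∖ ℝ` and
`(i/2π) ∫_ℂ ∂̄Ψ̃(z) R(z) dz̄ ∧ dz = (-1/π) ∫∫ ∂̄Ψ̃ R dx dy` has operator norm at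
most `c' ‖Ψ‖_{N+1}`, with `c'` depending only on `c`, `α`, `N` and `τ`. -/
theorem dhs_integral_norm_bound (α c : ℝ) (hα : 0 ≤ α) (hc : 0 < c) (N : ℕ)
    (hN : α + 1 ≤ (N : ℝ)) (τ : ℝ → ℝ) (hτs : ContDiff ℝ (⊤ : ℕ∞) τ)
    (hτr : ∀ s, τ s ∈ Icc (0:ℝ) 1) (hτ1 : ∀ s : ℝ, |s| ≤ 1 → τ s = 1)
    (hτ0 : ∀ s : ℝ, 2 ≤ |s| → τ s = 0) :
    ∃ c' : ℝ, 0 < c' ∧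
      ∀ (X : Type) [NormedAddCommGroup X] [NormedSpace ℂ X] [CompleteSpace X],
        ∀ R : ℂ → X →L[ℂ] X, ContinuousOn R {z : ℂ | z.im ≠ 0} →
          (∀ z : ℂ, z.im ≠ 0 →
            ‖R z‖ ≤ c / |z.im| * (‖z‖ / |z.im|) ^ α) →
          ∀ Ψ : ℝ → ℂ, ContDiff ℝ (⊤ : ℕ∞) Ψ → HasCompactSupport Ψ →
            IntegrableOn (fun z : ℂ => dbar (aaExt N τ Ψ) z • R z)
              {z : ℂ | z.im ≠ 0} volume ∧
            ‖(-(Real.pi)⁻¹ : ℝ) •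
                ∫ z in {z : ℂ | z.im ≠ 0}, dbar (aaExt N τ Ψ) z • R z‖ ≤
              c' * psiNorm N Ψ := by
  obtain ⟨M, hM⟩ := exists_forall_norm_deriv_le hτs hτ0
  set K := c * 3 ^ N + 2 ^ (N + 1) * M * c * 3 ^ α
  have hK : 0 < K := by have := (norm_nonneg _).trans (hM 0); positivity
  refine ⟨4 * K / Real.pi, by positivity, fun X _ _ _ R hRc hRb Ψ hΨ hΨc => ?_⟩
  set S := {z : ℂ | z.im ≠ 0}
  have hS : MeasurableSet S := (measurableSet_eq_fun measurable_im measurable_const).compl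
  have hG := (integrable_stripMajorant (N := N) hΨ hΨc).const_mul K
  have hbound : ∀ᵐ z ∂volume.restrict S,
      ‖dbar (aaExt N τ Ψ) z • R z‖ ≤ K * stripMajorant N Ψ z :=
    ae_restrict_of_forall_mem hS fun z hz => by
      rw [norm_smul]
      exact norm_dbar_aaExt_mul_le hα hN hc.le hτs hτr hτ1 hτ0 hM hΨ hz (norm_nonneg _) (hRb z hz)
  have hmeas : AEStronglyMeasurable (fun z => dbar (aaExt N τ Ψ) z • R z) (volume.restrict S) :=
    ((continuous_dbar_aaExt hτs hΨ N).continuousOn.smul hRc).aestronglyMeasurable hS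
  refine ⟨hG.integrableOn.mono' hmeas hbound, ?_⟩
  calc ‖(-(Real.pi)⁻¹ : ℝ) • ∫ z in S, dbar (aaExt N τ Ψ) z • R z‖
      = (Real.pi)⁻¹ * ‖∫ z in S, dbar (aaExt N τ Ψ) z • R z‖ := by
        rw [norm_smul, norm_neg, norm_inv, Real.norm_of_nonneg Real.pi_pos.le]
    _ ≤ (Real.pi)⁻¹ * ∫ z, K * stripMajorant N Ψ z := by
        gcongr
        exact (norm_integral_le_of_norm_le hG.integrableOn hbound).trans
          (setIntegral_le_integral hG
            (ae_of_all _ fun z => mul_nonneg hK.le (stripMajorant_nonneg N Ψ z)))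
    _ = 4 * K / Real.pi * psiNorm N Ψ := by
        rw [integral_const_mul, integral_stripMajorant hΨ hΨc]; ring
end
end

section
/- Laplace-transform ray estimate underlying the L^p resolvent bound (proof of Lemma A.4): For every α ≥ 0 there exists c_α > 0 such that for every θ with 0 < |θ| < π there exists φ ∈ (−π/2, π/2) with |θ + φ| < π/2 and (1/cos φ)^α · (1/cos(θ + φ)) ≤ c_α (1/|sin θ|)^{α+1}. Consequently, for z = r e^{iθ} with r > 0 and 0 < |θ| < π, with this choice of φ, ∫_0^∞ (1/cos φ)^α e^{−ρ r cos(θ+φ)} dρ ≤ (c_α/|Im z|) ( |z|/|Im z| )^α. -/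
open Set Filter MeasureTheory Real
noncomputable section

/-! Take `φ = -θ/2`, so that both `φ` and `θ + φ` have cosine `cos (θ/2) > 0`. From
`sin θ = 2 sin (θ/2) cos (θ/2)` one gets `1 / cos (θ/2) ≤ 2 / |sin θ|`, which gives the pointwise
bound with `c = 2 ^ (α + 1)`. The Laplace integral along the ray equals that pointwise quantity
divided by `r`, and so does the right-hand side. -/

lemma abs_sin_le_two_mul_abs_cos_half (θ : ℝ) : |sin θ| ≤ 2 * |cos (θ / 2)| := by
  have hdouble : sin θ = 2 * sin (θ / 2) * cos (θ / 2) := by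
    rw [← sin_two_mul]; ring_nf
  rw [hdouble, abs_mul, abs_mul, abs_two]
  nlinarith [abs_nonneg (cos (θ / 2)), abs_sin_le_one (θ / 2)]

lemma cos_half_pos {θ : ℝ} (hθ : |θ| < π) : 0 < cos (θ / 2) := by
  obtain ⟨hlo, hhi⟩ := abs_lt.mp hθ
  exact cos_pos_of_mem_Ioo ⟨by linarith, by linarith⟩

lemma sin_ne_zero_of_abs_pos_of_abs_lt_pi {θ : ℝ} (h0 : 0 < |θ|) (hπ : |θ| < π) : sin θ ≠ 0 := by
  obtain ⟨hlo, hhi⟩ := abs_lt.mp hπ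
  rw [Ne, sin_eq_zero_iff_of_lt_of_lt hlo hhi]
  exact abs_pos.mp h0

lemma one_div_cos_half_le {θ : ℝ} (h0 : 0 < |θ|) (hπ : |θ| < π) :
    1 / cos (θ / 2) ≤ 2 * (1 / |sin θ|) := by
  have hcos := cos_half_pos hπ
  have hsin := abs_pos.mpr (sin_ne_zero_of_abs_pos_of_abs_lt_pi h0 hπ)
  rw [mul_one_div, div_le_div_iff₀ hcos hsin, one_mul]
  simpa [abs_of_pos hcos] using abs_sin_le_two_mul_abs_cos_half θ

lemma one_div_cos_half_rpow_mul_le {α θ : ℝ} (hα : 0 ≤ α + 1) (h0 : 0 < |θ|) (hπ : |θ| < π) :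
    (1 / cos (θ / 2)) ^ α * (1 / cos (θ / 2)) ≤ 2 ^ (α + 1) * (1 / |sin θ|) ^ (α + 1) := by
  have hpos : 0 < 1 / cos (θ / 2) := one_div_pos.mpr (cos_half_pos hπ)
  calc (1 / cos (θ / 2)) ^ α * (1 / cos (θ / 2))
      = (1 / cos (θ / 2)) ^ (α + 1) := (rpow_add_one hpos.ne' α).symm
    _ ≤ (2 * (1 / |sin θ|)) ^ (α + 1) := rpow_le_rpow hpos.le (one_div_cos_half_le h0 hπ) hα
    _ = 2 ^ (α + 1) * (1 / |sin θ|) ^ (α + 1) := mul_rpow zero_le_two (by positivity)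

lemma integral_const_mul_exp_neg_mul_Ioi (A : ℝ) {r b : ℝ} (hr : 0 < r) (hb : 0 < b) :
    ∫ ρ in Ioi (0 : ℝ), A * exp (-(ρ * r * b)) = A * (1 / b) / r := by
  have hexp : ∫ ρ in Ioi (0 : ℝ), exp (-(r * b) * ρ) = 1 / (r * b) := by
    rw [integral_exp_mul_Ioi (neg_neg_of_pos (mul_pos hr hb)) 0]
    field_simp
    simp
  simp_rw [integral_const_mul, show ∀ ρ, -(ρ * r * b) = -(r * b) * ρ from fun ρ => by ring, hexp]
  field_simp

lemma div_abs_mul_mul_div_abs_mul_rpow (c α : ℝ) {r s : ℝ} (hr : 0 < r) (hs : s ≠ 0) :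
    c / |r * s| * (r / |r * s|) ^ α = c * (1 / |s|) ^ (α + 1) / r := by
  have hs' : 0 < |s| := abs_pos.mpr hs
  rw [abs_mul, abs_of_pos hr, show r / (r * |s|) = 1 / |s| by field_simp,
    rpow_add_one (one_div_pos.mpr hs').ne' α]
  field_simp

/-- Laplace-transform ray estimate underlying the `L^p` resolvent bound
(proof of Lemma A.4). -/
theorem laplace_ray_estimate (α : ℝ) (hα : 0 ≤ α) :
    ∃ c > (0:ℝ), ∀ θ : ℝ, 0 < |θ| → |θ| < Real.pi →
      ∃ φ : ℝ, -(Real.pi/2) < φ ∧ φ < Real.pi/2 ∧ |θ + φ| < Real.pi/2 ∧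
        (1 / Real.cos φ) ^ α * (1 / Real.cos (θ + φ)) ≤
          c * (1 / |Real.sin θ|) ^ (α + 1) ∧
        ∀ r > (0:ℝ),
          (∫ ρ in Ioi (0:ℝ),
              (1 / Real.cos φ) ^ α * Real.exp (-(ρ * r * Real.cos (θ + φ)))) ≤
            c / |r * Real.sin θ| * (r / |r * Real.sin θ|) ^ α := by
  refine ⟨2 ^ (α + 1), by positivity, fun θ hθ0 hθπ => ?_⟩
  have hhalf : |θ / 2| < π / 2 := by rw [abs_div, abs_two]; linarith
  have hbound := one_div_cos_half_rpow_mul_le (α := α) (by linarith) hθ0 hθπ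
  refine ⟨-(θ / 2), by linarith [abs_lt.mp hhalf], by linarith [abs_lt.mp hhalf], ?_⟩
  simp only [show θ + -(θ / 2) = θ / 2 by ring, cos_neg]
  refine ⟨hhalf, hbound, fun r hr => ?_⟩
  rw [integral_const_mul_exp_neg_mul_Ioi _ hr (cos_half_pos hθπ),
    div_abs_mul_mul_div_abs_mul_rpow _ _ hr (sin_ne_zero_of_abs_pos_of_abs_lt_pi hθ0 hθπ)]
  exact div_le_div_of_nonneg_right hbound hr.le
end
end
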